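/- arXiv:1208.0147 — 4 statements merged into one kernel-verified Lean document; each statement's English description precedes it below -/
import Mathlib

section
/- Let M > 0 and let γ_n : [0,1] → {z ∈ ℂ : 0 < |z| ≤ 1/2} be a sequence of continuously differentiable curves satisfying ∫₀¹ |γ_n'(u)| / ( |γ_n(u)| · |log |γ_n(u)|| ) du ≤ M for every n, and such that γ_n(0) → 0 as n → ∞. Then the Euclidean lengths ∫₀¹ |γ_n'(u)| du tend to 0 as n → ∞. -/
/-!
Put `t = -log ‖γ‖`. Along the curve, `log t` changes at rate at most
`‖γ'‖ / (‖γ‖ |log ‖γ‖|)`, so hyperbolic length at most `M` forces `t ≥ e^{-M} t(0)`, i.e.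
`‖γ‖ ≤ ρ := ‖γ 0‖ ^ e^{-M}` on the whole curve. Writing `‖γ'‖` as the density times
`negMulLog ‖γ‖`, and using that `negMulLog` increases on `[0, 1/e]`, the Euclidean length is at
most `M · negMulLog ρ`, which tends to `0` with `γ 0`.
-/

open Filter Topology Real Set MeasureTheory
open scoped RealInnerProductSpace

lemma Real.monotoneOn_negMulLog : MonotoneOn negMulLog (Icc 0 (exp (-1))) := by
  refine monotoneOn_of_deriv_nonneg (convex_Icc _ _) continuous_negMulLog.continuousOn
    (differentiableOn_negMulLog.mono ?_) fun x hx => ?_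
  · rw [interior_Icc]
    exact fun y hy => ne_of_gt hy.1
  · rw [interior_Icc] at hx
    have : log x < -1 := (log_lt_iff_lt_exp hx.1).2 hx.2
    rw [deriv_negMulLog hx.1.ne']
    linarith

lemma Real.le_rpow_exp_neg_of_log_neg_log_sub_le {r s M : ℝ} (hr : 0 < r) (hr₁ : r < 1)
    (hs : 0 < s) (hs₁ : s < 1) (h : log (-log s) - M ≤ log (-log r)) :
    r ≤ s ^ exp (-M) := by
  have hlogs : 0 < -log s := neg_pos.2 (log_neg hs hs₁)
  have hlogr : 0 < -log r := neg_pos.2 (log_neg hr hr₁)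
  have key : exp (-M) * -log s ≤ -log r := by
    rw [← log_le_log_iff (by positivity) hlogr, log_mul (exp_pos _).ne' hlogs.ne', log_exp]
    linarith
  rw [← log_le_log_iff hr (by positivity), log_rpow hs]
  linarith

variable {E : Type*} [NormedAddCommGroup E]

theorem integral_norm_le_integral_mul_negMulLog {γ γ' : ℝ → E} {a b ρ : ℝ} (hab : a ≤ b)
    (hmem : ∀ x ∈ Icc a b, γ x ≠ 0 ∧ ‖γ x‖ ≤ ρ) (hρ : ρ ≤ exp (-1))
    (hint : IntervalIntegrable (fun u => ‖γ' u‖ / (‖γ u‖ * |log ‖γ u‖|)) volume a b) :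
    ∫ u in a..b, ‖γ' u‖ ≤
      (∫ u in a..b, ‖γ' u‖ / (‖γ u‖ * |log ‖γ u‖|)) * negMulLog ρ := by
  have hpt : ∀ x ∈ Icc a b,
      ‖γ' x‖ ≤ ‖γ' x‖ / (‖γ x‖ * |log ‖γ x‖|) * negMulLog ρ := by
    intro x hx
    have hr : 0 < ‖γ x‖ := norm_pos_iff.2 (hmem x hx).1
    have hr₁ : ‖γ x‖ < 1 := (hmem x hx).2.trans_lt (hρ.trans_lt (exp_lt_one_iff.2 (by norm_num)))
    have hlog : log ‖γ x‖ < 0 := log_neg hr hr₁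
    have hdens : ‖γ x‖ * |log ‖γ x‖| = negMulLog ‖γ x‖ := by
      rw [abs_of_neg hlog, negMulLog]
      ring
    calc ‖γ' x‖ = ‖γ' x‖ / (‖γ x‖ * |log ‖γ x‖|) * negMulLog ‖γ x‖ := by
          rw [← hdens, div_mul_cancel₀ _ (mul_pos hr (abs_pos.2 hlog.ne)).ne']
      _ ≤ ‖γ' x‖ / (‖γ x‖ * |log ‖γ x‖|) * negMulLog ρ := by
          gcongr
          exact monotoneOn_negMulLog ⟨hr.le, (hmem x hx).2.trans hρ⟩ ⟨hr.le.trans (hmem x hx).2, hρ⟩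
            (hmem x hx).2
  rw [← intervalIntegral.integral_mul_const, intervalIntegral.integral_of_le hab,
    intervalIntegral.integral_of_le hab]
  exact integral_mono_of_nonneg (Eventually.of_forall fun _ => norm_nonneg _)
    (hint.1.mul_const _)
    ((ae_restrict_mem measurableSet_Ioc).mono fun x hx => hpt x (Ioc_subset_Icc_self hx))

variable [InnerProductSpace ℝ E]

theorem HasDerivWithinAt.log_norm {f : ℝ → E} {f' : E} {s : Set ℝ} {x : ℝ}
    (hf : HasDerivWithinAt f f' s x) (hx : f x ≠ 0) :
    HasDerivWithinAt (fun u => Real.log ‖f u‖) (⟪f x, f'⟫ / ‖f x‖ ^ 2) s x := by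
  have hlog : (fun u => Real.log ‖f u‖) = fun u => Real.log (‖f u‖ ^ 2) / 2 := by
    funext u
    rw [Real.log_pow]
    ring
  rw [hlog]
  exact ((hf.norm_sq.log (by positivity)).div_const 2).congr_deriv (by ring)

theorem abs_inner_div_norm_sq_div_log_le (x v : E) :
    |⟪x, v⟫ / ‖x‖ ^ 2 / log ‖x‖| ≤ ‖v‖ / (‖x‖ * |log ‖x‖|) := by
  rcases eq_or_ne ‖x‖ 0 with hx | hx
  · simp [hx]
  rw [abs_div, abs_div, abs_of_nonneg (by positivity : (0 : ℝ) ≤ ‖x‖ ^ 2), div_div]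
  calc |⟪x, v⟫| / (‖x‖ ^ 2 * |log ‖x‖|)
      ≤ ‖x‖ * ‖v‖ / (‖x‖ ^ 2 * |log ‖x‖|) := by gcongr; exact abs_real_inner_le_norm x v
    _ = ‖v‖ / (‖x‖ * |log ‖x‖|) := by
      rw [pow_two, mul_assoc, mul_div_mul_left _ _ hx]

theorem log_neg_log_norm_sub_le_integral {γ γ' : ℝ → E} {a b : ℝ} (hab : a ≤ b)
    (hγ : ContinuousOn γ (Icc a b))
    (hγ' : ∀ x ∈ Ioo a b, HasDerivWithinAt γ (γ' x) (Ioi x) x)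
    (hmem : ∀ x ∈ Icc a b, γ x ≠ 0 ∧ ‖γ x‖ < 1)
    (hint : IntegrableOn (fun u => ‖γ' u‖ / (‖γ u‖ * |log ‖γ u‖|)) (Icc a b)) :
    log (-log ‖γ a‖) - log (-log ‖γ b‖) ≤
      ∫ u in a..b, ‖γ' u‖ / (‖γ u‖ * |log ‖γ u‖|) := by
  have hlog : ∀ x ∈ Icc a b, -log ‖γ x‖ ≠ 0 := fun x hx =>
    neg_ne_zero.2 (log_neg (norm_pos_iff.2 (hmem x hx).1) (hmem x hx).2).ne
  have hcont : ContinuousOn (fun u => -log (-log ‖γ u‖)) (Icc a b) :=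
    ((hγ.norm.log fun x hx => norm_ne_zero_iff.2 (hmem x hx).1).neg.log hlog).neg
  have hderiv : ∀ x ∈ Ioo a b, HasDerivWithinAt (fun u => -log (-log ‖γ u‖))
      (-(⟪γ x, γ' x⟫ / ‖γ x‖ ^ 2 / log ‖γ x‖)) (Ioi x) x := by
    intro x hx
    have hx' := Ioo_subset_Icc_self hx
    have h := (((hγ' x hx).log_norm (hmem x hx').1).neg.log (hlog x hx')).neg
    exact h.congr_deriv (by simp only [Pi.neg_apply, neg_div_neg_eq])
  have h := intervalIntegral.sub_le_integral_of_hasDeriv_right_of_le hab hcont hderiv hint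
    fun x _ => (neg_le_abs _).trans (abs_inner_div_norm_sq_div_log_le _ _)
  linarith

theorem norm_le_rpow_of_integral_le {γ γ' : ℝ → E} {a b M : ℝ}
    (hγ : ContinuousOn γ (Icc a b))
    (hγ' : ∀ x ∈ Ioo a b, HasDerivWithinAt γ (γ' x) (Ioi x) x)
    (hmem : ∀ x ∈ Icc a b, γ x ≠ 0 ∧ ‖γ x‖ < 1)
    (hint : IntegrableOn (fun u => ‖γ' u‖ / (‖γ u‖ * |log ‖γ u‖|)) (Icc a b))
    (hlen : ∫ u in a..b, ‖γ' u‖ / (‖γ u‖ * |log ‖γ u‖|) ≤ M) :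
    ∀ t ∈ Icc a b, ‖γ t‖ ≤ ‖γ a‖ ^ exp (-M) := by
  intro t ht
  have hsub : Icc a t ⊆ Icc a b := Icc_subset_Icc_right ht.2
  have ha : a ∈ Icc a b := ⟨le_rfl, ht.1.trans ht.2⟩
  have hloglog := log_neg_log_norm_sub_le_integral ht.1 (hγ.mono hsub)
    (fun x hx => hγ' x (Ioo_subset_Ioo_right ht.2 hx)) (fun x hx => hmem x (hsub hx))
    (hint.mono_set hsub)
  have hmono : ∫ u in a..t, ‖γ' u‖ / (‖γ u‖ * |log ‖γ u‖|) ≤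
      ∫ u in a..b, ‖γ' u‖ / (‖γ u‖ * |log ‖γ u‖|) :=
    intervalIntegral.integral_mono_interval le_rfl ht.1 ht.2
      (Eventually.of_forall fun u => by positivity)
      ((intervalIntegrable_iff_integrableOn_Icc_of_le ha.2).2 hint)
  exact le_rpow_exp_neg_of_log_neg_log_sub_le (norm_pos_iff.2 (hmem t ht).1) (hmem t ht).2
    (norm_pos_iff.2 (hmem a ha).1) (hmem a ha).2 (by linarith)

theorem integral_norm_deriv_le_mul_negMulLog {γ γ' : ℝ → E} {a b M : ℝ} (hab : a ≤ b)
    (hmem : ∀ x ∈ Icc a b, γ x ≠ 0 ∧ ‖γ x‖ < 1)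
    (hderiv : ∀ x ∈ Icc a b, HasDerivWithinAt γ (γ' x) (Icc a b) x)
    (hcont : ContinuousOn γ' (Icc a b))
    (hlen : ∫ u in a..b, ‖γ' u‖ / (‖γ u‖ * |log ‖γ u‖|) ≤ M)
    (hρ : ‖γ a‖ ^ exp (-M) ≤ exp (-1)) :
    ∫ u in a..b, ‖γ' u‖ ≤ M * negMulLog (‖γ a‖ ^ exp (-M)) := by
  have hγ : ContinuousOn γ (Icc a b) := fun x hx => (hderiv x hx).continuousWithinAt
  have hγ' : ∀ x ∈ Ioo a b, HasDerivWithinAt γ (γ' x) (Ioi x) x := fun x hx =>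
    ((hderiv x (Ioo_subset_Icc_self hx)).hasDerivAt (Icc_mem_nhds hx.1 hx.2)).hasDerivWithinAt
  have hint : IntegrableOn (fun u => ‖γ' u‖ / (‖γ u‖ * |log ‖γ u‖|)) (Icc a b) :=
    (hcont.norm.div (hγ.norm.mul (hγ.norm.log fun x hx => norm_ne_zero_iff.2 (hmem x hx).1).abs)
      fun x hx => (mul_pos (norm_pos_iff.2 (hmem x hx).1)
        (abs_pos.2 (log_neg (norm_pos_iff.2 (hmem x hx).1) (hmem x hx).2).ne)).ne'
      ).integrableOn_Icc
  have hbound := norm_le_rpow_of_integral_le hγ hγ' hmem hint hlen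
  calc ∫ u in a..b, ‖γ' u‖
      ≤ (∫ u in a..b, ‖γ' u‖ / (‖γ u‖ * |log ‖γ u‖|)) * negMulLog (‖γ a‖ ^ exp (-M)) :=
        integral_norm_le_integral_mul_negMulLog hab (fun x hx => ⟨(hmem x hx).1, hbound x hx⟩) hρ
          ((intervalIntegrable_iff_integrableOn_Icc_of_le hab).2 hint)
    _ ≤ M * negMulLog (‖γ a‖ ^ exp (-M)) := by
        gcongr
        exact negMulLog_nonneg (by positivity) (hρ.trans (exp_le_one_iff.2 (by norm_num)))

theorem stmt_4_general
    (M : ℝ)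
    (γ γ' : ℕ → ℝ → ℂ)
    (hmem : ∀ n, ∀ u ∈ Set.Icc (0 : ℝ) 1, γ n u ≠ 0 ∧ ‖γ n u‖ ≤ 1 / 2)
    (hderiv : ∀ n, ∀ u ∈ Set.Icc (0 : ℝ) 1,
      HasDerivWithinAt (γ n) (γ' n u) (Set.Icc (0 : ℝ) 1) u)
    (hcont : ∀ n, ContinuousOn (γ' n) (Set.Icc (0 : ℝ) 1))
    (hlen : ∀ n, (∫ u in (0 : ℝ)..1,
        ‖γ' n u‖ / (‖γ n u‖ * |Real.log (‖γ n u‖)|)) ≤ M)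
    (h0 : Tendsto (fun n => γ n 0) atTop (nhds 0)) :
    Tendsto (fun n => ∫ u in (0 : ℝ)..1, ‖γ' n u‖) atTop (nhds 0) := by
  have hρ : Tendsto (fun n => ‖γ n 0‖ ^ exp (-M)) atTop (𝓝 0) := by
    simpa [zero_rpow (exp_pos (-M)).ne'] using
      (tendsto_norm_zero.comp h0).rpow_const (Or.inr (exp_pos (-M)).le)
  have hlim : Tendsto (fun n => M * negMulLog (‖γ n 0‖ ^ exp (-M))) atTop (𝓝 0) := by
    simpa using ((continuous_negMulLog.tendsto 0).comp hρ).const_mul M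
  have hbound : ∀ᶠ n in atTop,
      ∫ u in (0 : ℝ)..1, ‖γ' n u‖ ≤ M * negMulLog (‖γ n 0‖ ^ exp (-M)) :=
    (hρ.eventually (ge_mem_nhds (exp_pos (-1)))).mono fun n hn =>
      integral_norm_deriv_le_mul_negMulLog zero_le_one
        (fun u hu => ⟨(hmem n u hu).1, (hmem n u hu).2.trans_lt (by norm_num)⟩)
        (hderiv n) (hcont n) (hlen n) hn
  exact tendsto_of_tendsto_of_tendsto_of_le_of_le' tendsto_const_nhds hlim
    (Eventually.of_forall fun n => intervalIntegral.integral_nonneg zero_le_one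
      fun u _ => norm_nonneg _) hbound

/-- C¹ curves in the punctured disk of radius 1/2 whose "hyperbolic-type"
length `∫ |γ'| / (|γ| |log |γ||)` is uniformly bounded and whose initial points tend to
the puncture have Euclidean lengths tending to `0`. -/
theorem stmt_4
    (M : ℝ) (hM : 0 < M)
    (γ γ' : ℕ → ℝ → ℂ)
    (hmem : ∀ n, ∀ u ∈ Set.Icc (0 : ℝ) 1, γ n u ≠ 0 ∧ ‖γ n u‖ ≤ 1 / 2)
    (hderiv : ∀ n, ∀ u ∈ Set.Icc (0 : ℝ) 1,
      HasDerivWithinAt (γ n) (γ' n u) (Set.Icc (0 : ℝ) 1) u)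
    (hcont : ∀ n, ContinuousOn (γ' n) (Set.Icc (0 : ℝ) 1))
    (hlen : ∀ n, (∫ u in (0 : ℝ)..1,
        ‖γ' n u‖ / (‖γ n u‖ * |Real.log (‖γ n u‖)|)) ≤ M)
    (h0 : Tendsto (fun n => γ n 0) atTop (nhds 0)) :
    Tendsto (fun n => ∫ u in (0 : ℝ)..1, ‖γ' n u‖) atTop (nhds 0) :=
  stmt_4_general M γ γ' hmem hderiv hcont hlen h0
end

section
/- Let (X, d) be a compact metric space and f : X → X a continuous map that is locally expanding: there exist ρ > 1 and ε > 0 such that d(f(x), f(y)) ≥ ρ·d(x, y) for all x, y ∈ X with d(x, y) < ε. Let A ⊆ X be a closed subset with f(A) ⊆ A such that the restriction f : A → A is a bijection. Then A is a finite set. -/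
/-!
The restriction `F` of `f` to `A` is a continuous bijection of a compact space, hence a
homeomorphism, and by uniform continuity its inverse `g` contracts distances by `ρ⁻¹` at some
scale `δ`. The iterates of `g` are then uniformly equicontinuous, so by pigeonhole on finite nets
two of them, `g^[k]` and `g^[l]` with `k < l`, are uniformly `δ`-close; since `g^[k]` is onto,
`g^[l - k]` moves every point by less than `δ`, and pulling back along `g^[j]` shrinks that
displacement by `ρ⁻ʲ`, so `g^[l - k] = id`. A periodic map contracting at scale `δ` forces
distinct points to be `δ`-apart, and a compact uniformly discrete space is finite.
-/

open Filter Topology Function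

section LocallyContracting

variable {Y : Type*} [PseudoMetricSpace Y] {g : Y → Y} {c δ : ℝ}

theorem dist_iterate_le_pow_mul (hc0 : 0 ≤ c) (hc1 : c ≤ 1)
    (hg : ∀ u v, dist u v < δ → dist (g u) (g v) ≤ c * dist u v) {u v : Y}
    (huv : dist u v < δ) (n : ℕ) : dist (g^[n] u) (g^[n] v) ≤ c ^ n * dist u v := by
  induction n with
  | zero => simp
  | succ n ih =>
    have hn : dist (g^[n] u) (g^[n] v) < δ :=
      ih.trans_lt ((mul_le_of_le_one_left dist_nonneg (pow_le_one₀ hc0 hc1)).trans_lt huv)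
    rw [iterate_succ_apply', iterate_succ_apply']
    calc dist (g (g^[n] u)) (g (g^[n] v)) ≤ c * dist (g^[n] u) (g^[n] v) := hg _ _ hn
      _ ≤ c * (c ^ n * dist u v) := by gcongr
      _ = c ^ (n + 1) * dist u v := by ring

theorem uniformEquicontinuous_iterate_of_dist_le_mul (hδ : 0 < δ) (hc0 : 0 ≤ c) (hc1 : c ≤ 1)
    (hg : ∀ u v, dist u v < δ → dist (g u) (g v) ≤ c * dist u v) :
    UniformEquicontinuous fun n => g^[n] := by
  refine Metric.uniformEquicontinuous_iff.mpr fun ε hε => ⟨min δ ε, lt_min hδ hε, ?_⟩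
  intro u v huv n
  calc dist (g^[n] u) (g^[n] v) ≤ c ^ n * dist u v :=
        dist_iterate_le_pow_mul hc0 hc1 hg (huv.trans_le (min_le_left _ _)) n
    _ ≤ dist u v := mul_le_of_le_one_left dist_nonneg (pow_le_one₀ hc0 hc1)
    _ < ε := huv.trans_le (min_le_right _ _)

end LocallyContracting

theorem Homeomorph.exists_dist_symm_le_inv_mul {Y Z : Type*} [PseudoMetricSpace Y]
    [PseudoMetricSpace Z] [CompactSpace Z] (F : Y ≃ₜ Z) {ρ ε : ℝ} (hρ : 0 < ρ) (hε : 0 < ε)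
    (hF : ∀ u v, dist u v < ε → ρ * dist u v ≤ dist (F u) (F v)) :
    ∃ δ > 0, ∀ u v, dist u v < δ → dist (F.symm u) (F.symm v) ≤ ρ⁻¹ * dist u v := by
  obtain ⟨δ, hδ, hδε⟩ := Metric.uniformContinuous_iff.mp
    (CompactSpace.uniformContinuous_of_continuous F.symm.continuous) ε hε
  refine ⟨δ, hδ, fun u v huv => (le_inv_mul_iff₀ hρ).mpr ?_⟩
  simpa only [F.apply_symm_apply] using hF _ _ (hδε huv)

theorem UniformEquicontinuous.exists_lt_forall_dist_lt {X Y : Type*} [PseudoMetricSpace X]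
    [CompactSpace X] [PseudoMetricSpace Y] [CompactSpace Y] {G : ℕ → X → Y}
    (hG : UniformEquicontinuous G) {δ : ℝ} (hδ : 0 < δ) :
    ∃ k l, k < l ∧ ∀ x, dist (G k x) (G l x) < δ := by
  obtain ⟨η, hη, hGη⟩ := Metric.uniformEquicontinuous_iff.mp hG (δ / 4) (by positivity)
  obtain ⟨s, -, hs, hXs⟩ := finite_cover_balls_of_compact (isCompact_univ (X := X)) hη
  obtain ⟨t, -, ht, hYt⟩ :=
    finite_cover_balls_of_compact (isCompact_univ (X := Y)) (by positivity : 0 < δ / 4)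
  have hnear : ∀ y, ∃ z ∈ t, dist y z < δ / 4 := fun y => by
    simpa using hYt (Set.mem_univ y)
  choose near hnear_mem hnear_dist using hnear
  have : Finite s := hs.to_subtype
  -- the `δ / 4`-net point nearest to each `G n a`, `a` in the `η`-net, is a finite code for `G n`
  obtain ⟨k, l, hkl, hcode⟩ := Set.Finite.exists_lt_map_eq_of_forall_mem
    (f := fun n (a : s) => near (G n a)) (t := Set.univ.pi fun _ => t)
    (fun n => by simp [hnear_mem]) (Set.Finite.pi fun _ => ht)
  refine ⟨k, l, hkl, fun x => ?_⟩
  obtain ⟨a, ha, hxa⟩ : ∃ a ∈ s, dist x a < η := by simpa using hXs (Set.mem_univ x)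
  have hsame : near (G k a) = near (G l a) := congrFun hcode ⟨a, ha⟩
  calc dist (G k x) (G l x)
      ≤ dist (G k x) (G k a) + dist (G k a) (near (G k a)) + dist (near (G l a)) (G l a)
          + dist (G l a) (G l x) := by
        rw [← hsame]; exact (dist_triangle4 _ _ _ _).trans (by gcongr; exact dist_triangle _ _ _)
    _ < δ / 4 + δ / 4 + δ / 4 + δ / 4 := by
        gcongr
        · exact hGη x a hxa k
        · exact hnear_dist _
        · exact (dist_comm _ _).trans_lt (hnear_dist _)
        · exact hGη a x (by rwa [dist_comm]) l
    _ = δ := by ring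

section Contracting

variable {Y : Type*} [MetricSpace Y] {g : Y → Y} {c δ : ℝ}

theorem eq_id_of_commute_of_forall_dist_lt (hg : Surjective g) (hc0 : 0 ≤ c) (hc1 : c < 1)
    (hcontr : ∀ u v, dist u v < δ → dist (g u) (g v) ≤ c * dist u v) {h : Y → Y}
    (hcomm : Function.Commute g h) (hh : ∀ v, dist v (h v) < δ) : h = id := by
  funext w
  have hbound : ∀ j : ℕ, dist w (h w) ≤ c ^ j * δ := fun j => by
    obtain ⟨u, rfl⟩ := hg.iterate j w
    rw [← (hcomm.iterate_left j).eq u]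
    exact (dist_iterate_le_pow_mul hc0 hc1.le hcontr (hh u) j).trans
      (by gcongr; exact (hh u).le)
  have hlim : Tendsto (fun j : ℕ => c ^ j * δ) atTop (𝓝 0) := by
    simpa using (tendsto_pow_atTop_nhds_zero_of_lt_one hc0 hc1).mul_const δ
  exact (dist_le_zero.mp (ge_of_tendsto' hlim hbound)).symm

theorem finite_of_iterate_eq_id [CompactSpace Y] {m : ℕ} (hm : 0 < m) (hgm : g^[m] = id)
    (hδ : 0 < δ) (hc0 : 0 ≤ c) (hc1 : c < 1)
    (hcontr : ∀ u v, dist u v < δ → dist (g u) (g v) ≤ c * dist u v) : Finite Y := by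
  have hsep : ∀ u v : Y, dist u v < δ → u = v := fun u v huv => by
    have h := dist_iterate_le_pow_mul hc0 hc1.le hcontr huv m
    rw [hgm, id, id] at h
    have hcm : c ^ m < 1 := pow_lt_one₀ hc0 hc1 hm.ne'
    exact dist_le_zero.mp (by nlinarith [dist_nonneg (x := u) (y := v)])
  have : DiscreteTopology Y :=
    DiscreteTopology.of_forall_le_dist hδ fun u v huv => not_lt.mp fun h => huv (hsep u v h)
  exact finite_of_compact_of_discrete

end Contracting

theorem stmt_5_general
    {X : Type*} [MetricSpace X] [CompactSpace X]
    (f : X → X) (hf : Continuous f)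
    (ρ ε : ℝ) (hρ : 1 < ρ) (hε : 0 < ε)
    (hexp : ∀ x y : X, dist x y < ε → ρ * dist x y ≤ dist (f x) (f y))
    (A : Set X) (hA : IsClosed A)
    (hbij : Set.BijOn f A A) :
    A.Finite := by
  have : CompactSpace A := isCompact_iff_compactSpace.mp hA.isCompact
  let F : A ≃ₜ A := (hf.restrict hbij.mapsTo).homeoOfEquivCompactToT2 (f := hbij.equiv f)
  obtain ⟨δ, hδ, hcontr⟩ :=
    F.exists_dist_symm_le_inv_mul (by linarith) hε fun u v => hexp u v
  have hc0 : 0 ≤ ρ⁻¹ := by positivity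
  have hc1 : ρ⁻¹ < 1 := inv_lt_one_of_one_lt₀ hρ
  obtain ⟨k, l, hkl, hclose⟩ := (uniformEquicontinuous_iterate_of_dist_le_mul hδ hc0 hc1.le
    hcontr).exists_lt_forall_dist_lt hδ
  have hper : F.symm^[l - k] = id :=
    eq_id_of_commute_of_forall_dist_lt F.symm.surjective hc0 hc1 hcontr
      (Function.Commute.self_iterate _ _) fun v => by
        obtain ⟨u, rfl⟩ := F.symm.surjective.iterate k v
        rw [← iterate_add_apply, Nat.sub_add_cancel hkl.le]
        exact hclose u
  have := finite_of_iterate_eq_id (Nat.sub_pos_of_lt hkl) hper hδ hc0 hc1 hcontr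
  exact A.toFinite

/-- A closed invariant subset of a compact metric space on which a locally
expanding map restricts to a bijection is finite. -/
theorem stmt_5
    {X : Type*} [MetricSpace X] [CompactSpace X]
    (f : X → X) (hf : Continuous f)
    (ρ ε : ℝ) (hρ : 1 < ρ) (hε : 0 < ε)
    (hexp : ∀ x y : X, dist x y < ε → ρ * dist x y ≤ dist (f x) (f y))
    (A : Set X) (hA : IsClosed A) (hAinv : Set.MapsTo f A A)
    (hbij : Set.BijOn f A A) :
    A.Finite :=
  stmt_5_general f hf ρ ε hρ hε hexp A hA hbij
end

section
/- Let c ∈ ℂ with −π ≤ Im c < π and f(z) = e^z + c. There exists C₀ > 0 (depending only on c) such that for every w ∈ ℂ with Re w ≥ C₀, |Im f(w)| < π, and Re f(w) > Re c, one has Re f(w) ≥ Re c + e^{Re w}/2 and Re c + e^{Re w}/2 ≥ (Re w)². -/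
/-!
Write `w = x + iy`, so `f w = eˣ cos y + c + i (eˣ sin y + Im c)`. The strip condition bounds
`eˣ |sin y|` by `π + |Im c|`, so once `eˣ` is large `|sin y| < 1/2`; and `Re f(w) > Re c` means
`cos y > 0`, which then forces `cos y ≥ 1/2`. The second inequality is the growth of `eˣ`
against `x²`.
-/

open Real Filter

lemma half_le_cos_of_abs_sin_le {y : ℝ} (hcos : 0 ≤ cos y) (hsin : |sin y| ≤ 1 / 2) :
    1 / 2 ≤ cos y := by
  have hsin_sq : sin y ^ 2 ≤ 1 / 4 := by nlinarith [sq_abs (sin y), abs_nonneg (sin y)]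
  nlinarith [sin_sq_add_cos_sq y]

lemma half_le_mul_cos_of_abs_mul_sin_add_lt {r y b : ℝ} (hr : 4 * (π + |b|) ≤ r)
    (him : |r * sin y + b| < π) (hre : 0 < r * cos y) : r / 2 ≤ r * cos y := by
  have hr_pos : 0 < r := by linarith [pi_pos, abs_nonneg b]
  have hcos : 0 ≤ cos y := (pos_of_mul_pos_right hre hr_pos.le).le
  have hmul_sin : r * |sin y| < π + |b| := by
    calc r * |sin y| = |r * sin y + b - b| := by rw [add_sub_cancel_right, abs_mul, abs_of_pos hr_pos]
      _ ≤ |r * sin y + b| + |b| := abs_sub _ _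
      _ < π + |b| := by linarith
  have hsin : |sin y| ≤ 1 / 2 := by nlinarith [abs_nonneg (sin y)]
  nlinarith [half_le_cos_of_abs_sin_le hcos hsin]

lemma eventually_sq_le_add_exp_div_two (a : ℝ) : ∀ᶠ x in atTop, x ^ 2 ≤ a + exp x / 2 := by
  filter_upwards [(tendsto_exp_div_pow_atTop 2).eventually_ge_atTop 4,
    (tendsto_pow_atTop two_ne_zero).eventually_ge_atTop (-a), eventually_gt_atTop 0]
    with x hratio hsq hx
  rw [le_div_iff₀ (by positivity)] at hratio
  linarith

theorem stmt_10_general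
    (c : ℂ)
    (f : ℂ → ℂ) (hf : f = fun z => Complex.exp z + c) :
    ∃ C₀ : ℝ, 0 < C₀ ∧ ∀ w : ℂ, C₀ ≤ w.re → |(f w).im| < Real.pi → c.re < (f w).re →
      c.re + Real.exp w.re / 2 ≤ (f w).re ∧ w.re ^ 2 ≤ c.re + Real.exp w.re / 2 := by
  subst hf
  obtain ⟨C, hC⟩ := eventually_atTop.1 <|
    (eventually_sq_le_add_exp_div_two c.re).and
      (tendsto_exp_atTop.eventually_ge_atTop (4 * (π + |c.im|)))
  refine ⟨max C 1, by positivity, fun w hw him hre => ?_⟩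
  obtain ⟨hsq, hexp⟩ := hC w.re (le_of_max_le_left hw)
  simp only [Complex.add_re, Complex.add_im, Complex.exp_re, Complex.exp_im] at him hre ⊢
  have hcos := half_le_mul_cos_of_abs_mul_sin_add_lt hexp him (by linarith)
  exact ⟨by linarith, hsq⟩

/-- For `f(z) = e^z + c` with `-π ≤ Im c < π`, there is `C₀ > 0` such that
any point `w` with `Re w ≥ C₀` whose image lies in the strip `|Im f(w)| < π` and has
`Re f(w) > Re c` satisfies `Re f(w) ≥ Re c + e^{Re w}/2 ≥ (Re w)²`. -/
theorem stmt_10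
    (c : ℂ) (hc1 : -Real.pi ≤ c.im) (hc2 : c.im < Real.pi)
    (f : ℂ → ℂ) (hf : f = fun z => Complex.exp z + c) :
    ∃ C₀ : ℝ, 0 < C₀ ∧ ∀ w : ℂ, C₀ ≤ w.re → |(f w).im| < Real.pi → c.re < (f w).re →
      c.re + Real.exp w.re / 2 ≤ (f w).re ∧ w.re ^ 2 ≤ c.re + Real.exp w.re / 2 :=
  stmt_10_general c f hf
end

section
/- Let α ∈ ℂ and let f be holomorphic on a neighborhood of α with f(α) = α and μ := |f'(α)| > 1 (α is a repelling fixed point). Then there exist r > 0, C > 1, and a holomorphic map ψ : B(α, r) → B(α, r) with ψ(α) = α and f(ψ(z)) = z for all z ∈ B(α, r), such that for every n ≥ 1 and every x ∈ B(α, r): 1/(C μ^n) < |(ψ^n)'(x)| < C/μ^n. -/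
/-!
Let `ψ` be the inverse branch of `f` fixing `α`, and `a = f'(α)`, so that `a ψ'(α) = 1` and
`‖ψ'(α)‖ = 1/μ < 1`. Near `α` the branch `ψ` contracts towards `α` by a factor `l < 1`, and the
normalized derivative `a ψ'` is `1 + O(|y - α|)`. By the chain rule `aⁿ (ψⁿ)'(x)` is the product of
the values of `a ψ'` along the orbit `x, ψ x, …, ψⁿ⁻¹ x`, whose distances to `α` decay like `lᵏ r`.
The deviations from `1` are therefore summable, of total size `O(r)`, so on a small ball the
product stays within `1/2` of `1`, uniformly in `n` and `x`.
-/

open Filter Metric Set Finset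
open scoped Topology

theorem eventually_nhdsGT_forall_mem_ball {X : Type*} [PseudoMetricSpace X] {x : X}
    {p : X → Prop} (h : ∀ᶠ y in 𝓝 x, p y) : ∀ᶠ r in 𝓝[>] (0 : ℝ), ∀ y ∈ ball x r, p y := by
  obtain ⟨ε, hε, hball⟩ := Metric.eventually_nhds_iff_ball.1 h
  filter_upwards [Ioo_mem_nhdsGT hε] with r hr y hy using hball y (ball_subset_ball hr.2.le hy)

section Contraction

variable {X : Type*} [PseudoMetricSpace X] {ψ : X → X} {α : X} {r l : ℝ}

theorem mapsTo_ball_of_dist_le (hl : l ≤ 1)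
    (hψ : ∀ y ∈ ball α r, dist (ψ y) α ≤ l * dist y α) :
    MapsTo ψ (ball α r) (ball α r) := fun y hy =>
  (hψ y hy).trans_lt ((mul_le_of_le_one_left dist_nonneg hl).trans_lt hy)

theorem dist_iterate_le (hl0 : 0 ≤ l) (hl1 : l ≤ 1)
    (hψ : ∀ y ∈ ball α r, dist (ψ y) α ≤ l * dist y α) {x : X} (hx : x ∈ ball α r) (k : ℕ) :
    dist (ψ^[k] x) α ≤ l ^ k * dist x α := by
  induction k with
  | zero => simp
  | succ k ih =>
    rw [Function.iterate_succ_apply', pow_succ', mul_assoc]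
    exact (hψ _ ((mapsTo_ball_of_dist_le hl1 hψ).iterate k hx)).trans
      (mul_le_mul_of_nonneg_left ih hl0)

end Contraction

section Derivatives

variable {𝕜 : Type*} [NontriviallyNormedField 𝕜]

theorem HasDerivAt.eventually_dist_le {F : Type*} [NormedAddCommGroup F] [NormedSpace 𝕜 F]
    {φ : 𝕜 → F} {φ' : F} {x : 𝕜} {l : ℝ} (h : HasDerivAt φ φ' x) (hl : ‖φ'‖ < l) :
    ∀ᶠ y in 𝓝 x, dist (φ y) (φ x) ≤ l * dist y x := by
  filter_upwards [(hasDerivAt_iff_isLittleO.1 h).def (sub_pos.2 hl)] with y hy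
  rw [dist_eq_norm, dist_eq_norm]
  calc ‖φ y - φ x‖ = ‖(φ y - φ x - (y - x) • φ') + (y - x) • φ'‖ := by rw [sub_add_cancel]
    _ ≤ (l - ‖φ'‖) * ‖y - x‖ + ‖y - x‖ * ‖φ'‖ := norm_add_le_of_le hy (norm_smul _ _).le
    _ = l * ‖y - x‖ := by ring

theorem hasDerivAt_iterate_of_mapsTo {ψ : 𝕜 → 𝕜} {s : Set 𝕜} (hs : MapsTo ψ s s)
    (hψ : ∀ y ∈ s, DifferentiableAt 𝕜 ψ y) {x : 𝕜} (hx : x ∈ s) (n : ℕ) :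
    HasDerivAt ψ^[n] (∏ k ∈ range n, deriv ψ (ψ^[k] x)) x := by
  induction n with
  | zero => simpa using hasDerivAt_id x
  | succ n ih =>
    rw [Function.iterate_succ', prod_range_succ, mul_comm]
    exact (hψ _ (hs.iterate n hx)).hasDerivAt.comp x ih

theorem norm_pow_mul_deriv_iterate_sub_one_le {ψ : 𝕜 → 𝕜} {α c x : 𝕜} {r l K : ℝ}
    (hl0 : 0 ≤ l) (hl1 : l < 1) (hK : 0 ≤ K)
    (hdiff : ∀ y ∈ ball α r, DifferentiableAt 𝕜 ψ y)
    (hcontr : ∀ y ∈ ball α r, dist (ψ y) α ≤ l * dist y α)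
    (hlin : ∀ y ∈ ball α r, ‖c * deriv ψ y - 1‖ ≤ K * dist y α)
    (hx : x ∈ ball α r) (n : ℕ) :
    ‖c ^ n * deriv ψ^[n] x - 1‖ ≤ Real.exp (K * r / (1 - l)) - 1 := by
  have hmaps := mapsTo_ball_of_dist_le hl1.le hcontr
  have hfactor (k : ℕ) : ‖c * deriv ψ (ψ^[k] x) - 1‖ ≤ K * r * l ^ k :=
    calc _ ≤ K * dist (ψ^[k] x) α := hlin _ (hmaps.iterate k hx)
      _ ≤ K * (l ^ k * r) := by
          gcongr
          exact (dist_iterate_le hl0 hl1.le hcontr hx k).trans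
            (mul_le_mul_of_nonneg_left (mem_ball.1 hx).le (pow_nonneg hl0 k))
      _ = K * r * l ^ k := by ring
  have hsum : ∑ k ∈ range n, K * r * l ^ k ≤ K * r / (1 - l) := by
    have hgeom := geom_sum_Ico_le_of_lt_one (m := 0) (n := n) hl0 hl1
    rw [← range_eq_Ico, pow_zero] at hgeom
    rw [← mul_sum, ← mul_one_div]
    exact mul_le_mul_of_nonneg_left hgeom (mul_nonneg hK (pos_of_mem_ball hx).le)
  rw [(hasDerivAt_iterate_of_mapsTo hmaps hdiff hx n).deriv]
  calc ‖c ^ n * ∏ k ∈ range n, deriv ψ (ψ^[k] x) - 1‖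
      = ‖∏ k ∈ range n, (1 + (c * deriv ψ (ψ^[k] x) - 1)) - 1‖ := by
        simp only [add_sub_cancel, ← pow_card_mul_prod, card_range]
    _ ≤ Real.exp (∑ k ∈ range n, ‖c * deriv ψ (ψ^[k] x) - 1‖) - 1 :=
        (range n).norm_prod_one_add_sub_one_le _
    _ ≤ Real.exp (K * r / (1 - l)) - 1 := by
        gcongr
        exact (sum_le_sum fun k _ => hfactor k).trans hsum

theorem AnalyticAt.eventually_norm_pow_mul_deriv_iterate_sub_one_lt [CompleteSpace 𝕜]
    {ψ : 𝕜 → 𝕜} {α c : 𝕜}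
    (hψ : AnalyticAt 𝕜 ψ α) (hψα : ψ α = α) (hc : c * deriv ψ α = 1) (hc1 : 1 < ‖c‖) :
    ∀ᶠ r in 𝓝[>] 0, MapsTo ψ (ball α r) (ball α r) ∧
      ∀ n : ℕ, ∀ x ∈ ball α r, ‖c ^ n * deriv ψ^[n] x - 1‖ < 1 / 2 := by
  obtain ⟨l, hcl, hl1⟩ := exists_between (inv_lt_one_of_one_lt₀ hc1)
  have hl0 : 0 ≤ l := (inv_nonneg.2 (norm_nonneg c)).trans hcl.le
  have hderiv : ‖deriv ψ α‖ < l := by rwa [eq_inv_of_mul_eq_one_right hc, norm_inv]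
  have hcontr : ∀ᶠ y in 𝓝 α, dist (ψ y) α ≤ l * dist y α := by
    simpa only [hψα] using hψ.differentiableAt.hasDerivAt.eventually_dist_le hderiv
  obtain ⟨K, hK, hKlin⟩ :=
    (hψ.deriv.differentiableAt.const_mul c).isBigO_sub.exists_pos
  have hlin : ∀ᶠ y in 𝓝 α, ‖c * deriv ψ y - 1‖ ≤ K * dist y α := by
    filter_upwards [hKlin.bound] with y hy
    rwa [hc, ← dist_eq_norm y α] at hy
  have hsmall : ∀ᶠ r in 𝓝[>] 0, Real.exp (K * r / (1 - l)) - 1 < 1 / 2 := by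
    have hcont : Continuous fun r : ℝ => Real.exp (K * r / (1 - l)) - 1 := by fun_prop
    have htendsto := hcont.tendsto 0
    simp only [mul_zero, zero_div, Real.exp_zero, sub_self] at htendsto
    exact nhdsWithin_le_nhds (htendsto.eventually (gt_mem_nhds one_half_pos))
  filter_upwards [hsmall, eventually_nhdsGT_forall_mem_ball
    (hψ.eventually_analyticAt.and (hcontr.and hlin))] with r hr hball
  simp only [imp_and, forall_and] at hball
  obtain ⟨hanalytic, hcontr_r, hlin_r⟩ := hball
  exact ⟨mapsTo_ball_of_dist_le hl1.le hcontr_r, fun n x hx =>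
    (norm_pow_mul_deriv_iterate_sub_one_le hl0 hl1 hK.le
      (fun y hy => (hanalytic y hy).differentiableAt) hcontr_r hlin_r hx n).trans_lt hr⟩

end Derivatives

theorem norm_mem_Ioo_of_norm_mul_sub_one_lt_half {𝕜 : Type*} [NormedDivisionRing 𝕜] {w z : 𝕜}
    (h : ‖w * z - 1‖ < 1 / 2) : ‖z‖ ∈ Ioo (1 / (2 * ‖w‖)) (2 / ‖w‖) := by
  have habs : |‖w‖ * ‖z‖ - 1| < 1 / 2 := by
    simpa only [norm_mul, norm_one] using (abs_norm_sub_norm_le (w * z) 1).trans_lt h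
  obtain ⟨hlo, hhi⟩ := abs_lt.1 habs
  have hw : 0 < ‖w‖ := pos_of_mul_pos_left (by linarith) (norm_nonneg z)
  constructor
  · rw [div_lt_iff₀ (by positivity)]
    linarith
  · rw [lt_div_iff₀ hw]
    linarith

/-- Near a repelling fixed point `α` (with multiplier modulus `μ > 1`) of
a map `f` holomorphic near `α`, there is an inverse branch `ψ` of `f` fixing `α` on a
ball `B(α, r)`, and a constant `C > 1`, such that `1/(Cμⁿ) < |(ψⁿ)'(x)| < C/μⁿ` for all
`n ≥ 1` and all `x ∈ B(α, r)`. -/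
theorem stmt_17
    (α : ℂ) (f : ℂ → ℂ) (U : Set ℂ) (hU : U ∈ nhds α)
    (hf : DifferentiableOn ℂ f U) (hfix : f α = α)
    (μ : ℝ) (hμ : μ = ‖deriv f α‖) (hrep : 1 < μ) :
    ∃ r : ℝ, 0 < r ∧ ∃ C : ℝ, 1 < C ∧ ∃ ψ : ℂ → ℂ,
      DifferentiableOn ℂ ψ (Metric.ball α r) ∧
      Set.MapsTo ψ (Metric.ball α r) (Metric.ball α r) ∧
      ψ α = α ∧
      (∀ z ∈ Metric.ball α r, f (ψ z) = z) ∧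
      ∀ n : ℕ, 1 ≤ n → ∀ x ∈ Metric.ball α r,
        1 / (C * μ ^ n) < ‖deriv (ψ^[n]) x‖ ∧
        ‖deriv (ψ^[n]) x‖ < C / μ ^ n := by
  have hfa : AnalyticAt ℂ f α := hf.analyticAt hU
  have ha : deriv f α ≠ 0 := norm_pos_iff.1 (hμ ▸ one_pos.trans hrep)
  set ψ := hfa.hasStrictDerivAt.localInverse f (deriv f α) α ha
  have hψα : ψ α = α := by
    simpa only [hfix] using (hfa.hasStrictDerivAt.eventually_left_inverse ha).self_of_nhds
  have hψ : AnalyticAt ℂ ψ α := by simpa only [hfix] using hfa.analyticAt_localInverse ha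
  have hψ' : deriv f α * deriv ψ α = 1 := by
    have hinvderiv := (hfa.hasStrictDerivAt.to_localInverse ha).hasDerivAt
    rw [hfix] at hinvderiv
    rw [hinvderiv.deriv, mul_inv_cancel₀ ha]
  have hinv : ∀ᶠ y in 𝓝 α, f (ψ y) = y := by
    simpa only [hfix] using hfa.hasStrictDerivAt.eventually_right_inverse ha
  obtain ⟨r, ⟨hmaps, hbound⟩, hball, hr⟩ :=
    ((hψ.eventually_norm_pow_mul_deriv_iterate_sub_one_lt hψα hψ' (hμ ▸ hrep)).and
      ((eventually_nhdsGT_forall_mem_ball (hψ.eventually_analyticAt.and hinv)).and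
        self_mem_nhdsWithin)).exists
  refine ⟨r, hr, 2, one_lt_two, ψ, fun y hy => (hball y hy).1.differentiableWithinAt, hmaps, hψα,
    fun y hy => (hball y hy).2, fun n _ x hx => ?_⟩
  simpa only [norm_pow, ← hμ, Set.mem_Ioo] using
    norm_mem_Ioo_of_norm_mul_sub_one_lt_half (hbound n x hx)
end
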